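/- For every non-negative integer v, the function φ̃_v(x) = e^{x²/2}·h̃_v(x) satisfies the Schrödinger equation −φ̃_v''(x) + (x² − 1)·φ̃_v(x) = −2(v+1)·φ̃_v(x) for all real x. -/

import Mathlib

/-!
Writing `φ̃_v = e^{x²/2} h̃_v`, the Schrödinger equation for `φ̃_v` is equivalent to the
differential equation `h̃_v'' + 2x h̃_v' = 2v h̃_v` (conjugating by the Gaussian factor turns
`−d²/dx² + x² − 1` into `−d²/dx² − 2x d/dx − 2`). That equation follows from the recursion
together with the Appell property `h̃_{v+1}' = 2(v+1) h̃_v`, proved by induction.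
-/

open Polynomial

/-- Twisted Hermite polynomials `h̃_v(x) = i^{−v} H_v(ix)`:
`h̃₀ = 1`, `h̃_{v+1} = 2x·h̃_v + h̃_v'`. -/
noncomputable def hermiteTwist : ℕ → Polynomial ℝ
  | 0 => 1
  | v + 1 => 2 * X * hermiteTwist v + Polynomial.derivative (hermiteTwist v)

theorem derivative_hermiteTwist_succ (v : ℕ) :
    derivative (hermiteTwist (v + 1)) = 2 * (v + 1 : ℝ[X]) * hermiteTwist v := by
  induction v with
  | zero => simp [hermiteTwist]
  | succ n ih =>
    rw [hermiteTwist, derivative_add, derivative_mul, ih, derivative_mul]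
    simp only [hermiteTwist, derivative_mul, derivative_ofNat, derivative_X, derivative_add,
      derivative_natCast, derivative_one]
    push_cast
    ring

theorem hermiteTwist_ode (v : ℕ) :
    derivative (derivative (hermiteTwist v)) + 2 * X * derivative (hermiteTwist v) =
      2 * (v : ℝ[X]) * hermiteTwist v := by
  cases v with
  | zero => simp [hermiteTwist]
  | succ n =>
    rw [derivative_hermiteTwist_succ, derivative_mul, hermiteTwist]
    simp only [derivative_mul, derivative_ofNat, derivative_add, derivative_natCast,
      derivative_one]
    push_cast
    ring

theorem hasDerivAt_exp_sq_half_mul_eval (p : ℝ[X]) (x : ℝ) :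
    HasDerivAt (fun y => Real.exp (y ^ 2 / 2) * p.eval y)
      (Real.exp (x ^ 2 / 2) * (X * p + derivative p).eval x) x := by
  have hsq : HasDerivAt (fun y : ℝ => y ^ 2 / 2) x x := by
    simpa using (hasDerivAt_pow 2 x).div_const 2
  refine (hsq.exp.fun_mul (p.hasDerivAt x)).congr_deriv ?_
  simp only [eval_add, eval_mul, eval_X]
  ring

theorem deriv_exp_sq_half_mul_eval (p : ℝ[X]) :
    deriv (fun y => Real.exp (y ^ 2 / 2) * p.eval y) =
      fun x => Real.exp (x ^ 2 / 2) * (X * p + derivative p).eval x :=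
  funext fun x => (hasDerivAt_exp_sq_half_mul_eval p x).deriv

theorem harmonic_hamiltonian_exp_sq_half_mul_eval (p : ℝ[X]) (x : ℝ) :
    -deriv (deriv (fun y => Real.exp (y ^ 2 / 2) * p.eval y)) x
        + (x ^ 2 - 1) * (Real.exp (x ^ 2 / 2) * p.eval x) =
      -Real.exp (x ^ 2 / 2) *
        (derivative (derivative p) + 2 * X * derivative p + 2 * p).eval x := by
  rw [deriv_exp_sq_half_mul_eval, deriv_exp_sq_half_mul_eval]
  simp only [eval_add, eval_mul, eval_X, eval_ofNat, derivative_add, derivative_mul,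
    derivative_X, one_mul]
  ring

/-- the pseudo virtual state wavefunctions
`φ̃_v(x) = e^{x²/2}·h̃_v(x)` of the harmonic oscillator satisfy
`−φ̃_v'' + (x² − 1)·φ̃_v = −2(v+1)·φ̃_v`. -/
theorem harmonic_pseudo_virtual_state (v : ℕ) :
    ∀ x : ℝ,
      -(deriv (deriv (fun y => Real.exp (y ^ 2 / 2) * (hermiteTwist v).eval y)) x)
        + (x ^ 2 - 1) * (Real.exp (x ^ 2 / 2) * (hermiteTwist v).eval x)
      = -2 * (v + 1) * (Real.exp (x ^ 2 / 2) * (hermiteTwist v).eval x) := by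
  intro x
  rw [harmonic_hamiltonian_exp_sq_half_mul_eval, hermiteTwist_ode]
  simp only [eval_add, eval_mul, eval_ofNat, eval_natCast]
  ring
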